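/- arXiv:1809.06368 — 2 statements merged into one kernel-verified Lean document; each statement's English description precedes it below -/
import Mathlib

section
/- Third integral in the kinetic Weibel dispersion derivation: let v_th > 0, u ∈ ℝ, and define the two-beam Maxwellians f^±(v_x, v_y) = (1/(2π v_th²)) exp(−(v_x² + (v_y ± u)²)/(2 v_th²)). Then for every complex w with Im w > 0, setting ζ = w/(√2 v_th), Σ_{±} ∫_ℝ ∫_ℝ v_y (∂f^±/∂v_y)(v_x, v_y) / (w − v_x) dv_x dv_y = (√2 / v_th) Z(ζ). -/
open MeasureTheory

/-- The plasma dispersion function `Z(ζ) = π^{−1/2} ∫_ℝ e^{−x²}/(x − ζ) dx`. -/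
noncomputable def plasmaZ (ζ : ℂ) : ℂ :=
  (Real.sqrt Real.pi : ℂ)⁻¹ * ∫ x : ℝ, Complex.exp (-(x : ℂ) ^ 2) / ((x : ℂ) - ζ)

/-- The two-beam Maxwellian `f⁺(vx,vy) = (1/(2π v_th²)) exp(−(vx² + (vy + u)²)/(2 v_th²))`. -/
noncomputable def fPlus (vth u vx vy : ℝ) : ℝ :=
  (1 / (2 * Real.pi * vth ^ 2)) * Real.exp (-(vx ^ 2 + (vy + u) ^ 2) / (2 * vth ^ 2))

/-- The two-beam Maxwellian `f⁻(vx,vy) = (1/(2π v_th²)) exp(−(vx² + (vy − u)²)/(2 v_th²))`. -/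
noncomputable def fMinus (vth u vx vy : ℝ) : ℝ :=
  (1 / (2 * Real.pi * vth ^ 2)) * Real.exp (-(vx ^ 2 + (vy - u) ^ 2) / (2 * vth ^ 2))

/-!
Each beam factorizes as `f(v_x, v_y) = p(v_x) g(v_y)` with Gaussian `p` and `g`, so the double
integral splits into `(∫ v_y g'(v_y) dv_y) · ∫ p(v_x) / (w − v_x) dv_x`. Integration by parts turns
the first factor into `−∫ g`, a Gaussian integral, and the substitution `v_x = √2 v_th x` turns the
second into `−√π Z(ζ)` up to the normalisation of `p`. Each beam thus contributes
`Z(ζ) / (√2 v_th)`; the drift only shifts `g` and drops out.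
-/

open Real

theorem integrable_pow_mul_exp_neg_mul_sq {b : ℝ} (hb : 0 < b) (n : ℕ) :
    Integrable fun x : ℝ => x ^ n * exp (-b * x ^ 2) := by
  simpa only [rpow_natCast] using
    integrable_rpow_mul_exp_neg_mul_sq hb (s := n) (by linarith [n.cast_nonneg (α := ℝ)])

theorem hasDerivAt_exp_neg_mul_sq_add (b c t : ℝ) :
    HasDerivAt (fun t => exp (-b * (t + c) ^ 2)) (-2 * b * (t + c) * exp (-b * (t + c) ^ 2)) t := by
  convert ((((hasDerivAt_id' t).add_const c).fun_pow 2).const_mul (-b)).exp using 1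
  ring

theorem integral_mul_deriv_exp_neg_mul_sq_add {b : ℝ} (hb : 0 < b) (c : ℝ) :
    ∫ t, t * deriv (fun t => exp (-b * (t + c) ^ 2)) t = -√(π / b) := by
  have hshift (n : ℕ) : Integrable fun t : ℝ => (t + c) ^ n * exp (-b * (t + c) ^ 2) :=
    (integrable_pow_mul_exp_neg_mul_sq hb n).comp_add_right c
  have hibp := integral_mul_deriv_eq_deriv_mul_of_integrable (u := fun t => t)
    (v := fun t => exp (-b * (t + c) ^ 2)) (u' := fun _ => 1)
    (v' := fun t => -2 * b * (t + c) * exp (-b * (t + c) ^ 2))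
    (fun t _ => hasDerivAt_id t) (fun t _ => hasDerivAt_exp_neg_mul_sq_add b c t)
    (((hshift 2).sub ((hshift 1).const_mul c)).const_mul (-2 * b) |>.congr <|
      .of_forall fun t => by simp only [Pi.mul_apply, Pi.sub_apply]; ring)
    (by simpa only [Pi.mul_def, one_mul, pow_zero] using hshift 0)
    ((hshift 1).sub ((hshift 0).const_mul c) |>.congr <|
      .of_forall fun t => by simp only [Pi.mul_apply, Pi.sub_apply]; ring)
  simp only [(hasDerivAt_exp_neg_mul_sq_add b c _).deriv, hibp, one_mul,
    integral_add_right_eq_self (fun s => exp (-b * s ^ 2)) c, integral_gaussian]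

theorem sqrt_pi_mul_plasmaZ (ζ : ℂ) :
    √π * plasmaZ ζ = ∫ x : ℝ, Complex.exp (-(x : ℂ) ^ 2) / (x - ζ) := by
  have : (√π : ℂ) ≠ 0 := by exact_mod_cast (sqrt_pos.mpr pi_pos).ne'
  rw [plasmaZ, mul_inv_cancel_left₀ this]

theorem integral_exp_neg_div_sq_div_sub {a : ℝ} (ha : 0 < a) (w : ℂ) :
    ∫ x : ℝ, (exp (-(x / a) ^ 2) : ℂ) / (w - x) = -√π * plasmaZ (w / a) := by
  have ha' : (a : ℂ) ≠ 0 := by exact_mod_cast ha.ne'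
  have hpoint (y : ℝ) : (exp (-(a * y / a) ^ 2) : ℂ) / (w - (a * y : ℝ))
      = -(a : ℂ)⁻¹ * (Complex.exp (-(y : ℂ) ^ 2) / (y - w / a)) := by
    have hden : w - (a * y : ℝ) = -a * (y - w / a) := by push_cast; field_simp; ring
    rw [mul_div_cancel_left₀ y ha.ne', hden, Complex.ofReal_exp, mul_comm, div_mul_eq_div_div,
      div_neg, div_eq_inv_mul _ (a : ℂ)]
    push_cast
    ring
  have hsub := Measure.integral_comp_mul_left (fun x : ℝ => (exp (-(x / a) ^ 2) : ℂ) / (w - x)) a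
  simp only [hpoint, integral_const_mul, abs_inv, abs_of_pos ha] at hsub
  rw [← sqrt_pi_mul_plasmaZ, Complex.real_smul, Complex.ofReal_inv] at hsub
  rw [← mul_right_inj' (inv_ne_zero ha'), ← hsub]
  ring

theorem integral_integral_mul_deriv_div_sub_of_eq_mul {F : ℝ → ℝ → ℝ} {p g : ℝ → ℝ}
    (hF : ∀ x y, F x y = p x * g y) (w : ℂ) :
    ∫ vy : ℝ, ∫ vx : ℝ, (vy : ℂ) * ((deriv (fun t => F vx t) vy : ℝ) : ℂ) / (w - vx)
      = ((∫ vy, vy * deriv g vy : ℝ) : ℂ) * ∫ vx : ℝ, (p vx : ℂ) / (w - vx) := by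
  simp only [hF, deriv_const_mul_field']
  rw [← integral_complex_ofReal, ← integral_mul_const]
  refine integral_congr_ae (.of_forall fun vy => ?_)
  simp only [← integral_const_mul]
  refine integral_congr_ae (.of_forall fun vx => ?_)
  push_cast
  ring

theorem fPlus_eq_mul (vth c vx t : ℝ) :
    fPlus vth c vx t = (π * (√2 * vth) ^ 2)⁻¹ * exp (-(vx / (√2 * vth)) ^ 2) *
      exp (-((√2 * vth) ^ 2)⁻¹ * (t + c) ^ 2) := by
  have h2 : (√2 * vth) ^ 2 = 2 * vth ^ 2 := by rw [mul_pow, sq_sqrt zero_le_two]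
  rw [fPlus, mul_assoc _ (exp _) (exp _), ← exp_add, div_pow, h2]
  congr 2 <;> ring

theorem fMinus_eq_fPlus_neg (vth u vx vy : ℝ) : fMinus vth u vx vy = fPlus vth (-u) vx vy := by
  rw [fMinus, fPlus, sub_eq_add_neg]

theorem integral_integral_mul_deriv_fPlus_div_sub {vth : ℝ} (hvth : 0 < vth) (c : ℝ) (w : ℂ) :
    ∫ vy : ℝ, ∫ vx : ℝ, (vy : ℂ) * ((deriv (fun t => fPlus vth c vx t) vy : ℝ) : ℂ) / (w - vx)
      = plasmaZ (w / (√2 * vth)) / (√2 * vth) := by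
  have ha : 0 < √2 * vth := by positivity
  rw [integral_integral_mul_deriv_div_sub_of_eq_mul (fPlus_eq_mul vth c),
    integral_mul_deriv_exp_neg_mul_sq_add (inv_pos.mpr (pow_pos ha 2))]
  simp only [Complex.ofReal_mul, mul_div_assoc, integral_const_mul, integral_exp_neg_div_sq_div_sub ha]
  rw [div_inv_eq_mul, sqrt_mul pi_pos.le, sqrt_sq ha.le]
  have hπ : (√π : ℂ) ^ 2 = π := by exact_mod_cast sq_sqrt pi_pos.le
  have : (√π : ℂ) ≠ 0 := by exact_mod_cast (sqrt_pos.mpr pi_pos).ne'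
  have : ((√2 * vth : ℝ) : ℂ) ≠ 0 := by exact_mod_cast ha.ne'
  push_cast at *
  field_simp
  rw [hπ]

theorem weibel_third_integral_general
    (vth u : ℝ) (hvth : 0 < vth) (w : ℂ) :
    ((∫ vy : ℝ, ∫ vx : ℝ,
        (vy : ℂ) * ((deriv (fun t : ℝ => fPlus vth u vx t) vy : ℝ) : ℂ) / (w - (vx : ℂ))) +
      (∫ vy : ℝ, ∫ vx : ℝ,
        (vy : ℂ) * ((deriv (fun t : ℝ => fMinus vth u vx t) vy : ℝ) : ℂ) / (w - (vx : ℂ)))) =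
      ((Real.sqrt 2 : ℂ) / (vth : ℂ)) *
        plasmaZ (w / ((Real.sqrt 2 : ℂ) * (vth : ℂ))) := by
  simp only [fMinus_eq_fPlus_neg, integral_integral_mul_deriv_fPlus_div_sub hvth]
  have h2 : (√2 : ℂ) ^ 2 = 2 := by exact_mod_cast sq_sqrt zero_le_two
  have : (√2 : ℂ) ≠ 0 := by exact_mod_cast (sqrt_pos.mpr zero_lt_two).ne'
  have : (vth : ℂ) ≠ 0 := by exact_mod_cast hvth.ne'
  field_simp
  rw [h2]
  ring

/-- Third integral in the kinetic Weibel dispersion derivation: for `Im w > 0` and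
`ζ = w/(√2 v_th)`, `Σ_± ∫∫ v_y (∂f^±/∂v_y)/(w − v_x) dv_x dv_y = (√2/v_th) Z(ζ)`. -/
theorem weibel_third_integral
    (vth u : ℝ) (hvth : 0 < vth) (w : ℂ) (hw : 0 < w.im) :
    ((∫ vy : ℝ, ∫ vx : ℝ,
        (vy : ℂ) * ((deriv (fun t : ℝ => fPlus vth u vx t) vy : ℝ) : ℂ) / (w - (vx : ℂ))) +
      (∫ vy : ℝ, ∫ vx : ℝ,
        (vy : ℂ) * ((deriv (fun t : ℝ => fMinus vth u vx t) vy : ℝ) : ℂ) / (w - (vx : ℂ)))) =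
      ((Real.sqrt 2 : ℂ) / (vth : ℂ)) *
        plasmaZ (w / ((Real.sqrt 2 : ℂ) * (vth : ℂ))) :=
  weibel_third_integral_general vth u hvth w
end

section
/- Fourth integral in the kinetic Weibel dispersion derivation: let v_th > 0, u ∈ ℝ, and define the two-beam Maxwellians f^±(v_x, v_y) = (1/(2π v_th²)) exp(−(v_x² + (v_y ± u)²)/(2 v_th²)). Then for every complex w with Im w > 0, setting ζ = w/(√2 v_th), Σ_{±} ∫_ℝ ∫_ℝ v_x v_y (∂f^±/∂v_y)(v_x, v_y) / (w − v_x) dv_x dv_y = 2 (1 + ζ Z(ζ)), i.e. equals −Z′(ζ) where Z′(ζ) = −2(1 + ζ Z(ζ)). -/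
open MeasureTheory

/-!
Each beam is a product of one-dimensional Gaussian densities, `f^± = g₀(v_x) g_{∓u}(v_y)`, so each
double integral factors as `(∫ v_y g'_{∓u}(v_y)) · (∫ v_x g₀(v_x) / (w - v_x))`. Integration by parts
makes the first factor `-∫ g_{∓u} = -1`, whatever the drift. Rescaling `v_x = √2 v_th x` and splitting
`x / (x - ζ) = 1 + ζ / (x - ζ)` turns the second factor into `-(1 + ζ Z(ζ))`.
-/

open Real ProbabilityTheory
open scoped NNReal

lemma integral_cexp_neg_sq : ∫ x : ℝ, Complex.exp (-(x : ℂ) ^ 2) = √π := by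
  have h := integral_ofReal (𝕜 := ℂ) (μ := volume) (f := fun x : ℝ ↦ rexp (-1 * x ^ 2))
  rw [integral_gaussian] at h
  simpa [Complex.ofReal_exp] using h

lemma integrable_cexp_neg_sq : Integrable fun x : ℝ ↦ Complex.exp (-(x : ℂ) ^ 2) := by
  simpa using integrable_cexp_neg_mul_sq (b := 1) (by simp)

lemma integrable_cexp_neg_sq_div_sub {ζ : ℂ} (hζ : ζ.im ≠ 0) :
    Integrable fun x : ℝ ↦ Complex.exp (-(x : ℂ) ^ 2) / ((x : ℂ) - ζ) := by
  have hbound : ∀ x : ℝ, ‖((x : ℂ) - ζ)⁻¹‖ ≤ |ζ.im|⁻¹ := fun x ↦ by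
    rw [norm_inv]
    refine inv_anti₀ (abs_pos.mpr hζ) ?_
    simpa using Complex.abs_im_le_norm ((x : ℂ) - ζ)
  have hne : ∀ x : ℝ, (x : ℂ) - ζ ≠ 0 := fun x h ↦ hζ (by simpa using congrArg Complex.im h)
  simp_rw [div_eq_inv_mul]
  refine integrable_cexp_neg_sq.bdd_mul (c := |ζ.im|⁻¹) ?_ ?_
  · exact (Complex.continuous_ofReal.sub continuous_const |>.inv₀ hne).aestronglyMeasurable
  · exact Filter.Eventually.of_forall hbound

lemma integral_mul_cexp_neg_sq_div_sub {ζ : ℂ} (hζ : ζ.im ≠ 0) :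
    ∫ x : ℝ, (x : ℂ) * Complex.exp (-(x : ℂ) ^ 2) / ((x : ℂ) - ζ) = √π * (1 + ζ * plasmaZ ζ) := by
  have hne : ∀ x : ℝ, (x : ℂ) - ζ ≠ 0 := fun x h ↦ hζ (by simpa using congrArg Complex.im h)
  have hsplit : ∀ x : ℝ, (x : ℂ) * Complex.exp (-(x : ℂ) ^ 2) / ((x : ℂ) - ζ)
      = Complex.exp (-(x : ℂ) ^ 2) + ζ * (Complex.exp (-(x : ℂ) ^ 2) / ((x : ℂ) - ζ)) := by
    intro x
    field_simp [hne x]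
    ring
  simp_rw [hsplit]
  rw [integral_add integrable_cexp_neg_sq ((integrable_cexp_neg_sq_div_sub hζ).const_mul ζ),
    integral_const_mul, integral_cexp_neg_sq, plasmaZ]
  field_simp

lemma hasDerivAt_gaussianPDFReal (μ : ℝ) (v : ℝ≥0) (x : ℝ) :
    HasDerivAt (gaussianPDFReal μ v) (-(x - μ) / v * gaussianPDFReal μ v x) x := by
  have hexponent : HasDerivAt (fun y ↦ -(y - μ) ^ 2 / (2 * v)) (-(x - μ) / v) x := by
    refine (((hasDerivAt_id' x).sub_const μ).fun_pow 2).fun_neg.div_const _ |>.congr_deriv ?_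
    push_cast
    ring
  rw [gaussianPDFReal_def]
  exact (hexponent.exp.const_mul _).congr_deriv (by ring)

lemma integrable_pow_mul_gaussianPDFReal (μ : ℝ) {v : ℝ≥0} (hv : v ≠ 0) (n : ℕ) :
    Integrable fun x ↦ x ^ n * gaussianPDFReal μ v x := by
  have h : Integrable (fun x : ℝ ↦ x ^ n) (gaussianReal μ v) :=
    (memLp_id_gaussianReal n).integrable_norm_pow' |>.mono' (by fun_prop) (by simp)
  rw [gaussianReal_of_var_ne_zero μ hv, integrable_withDensity_iff_integrable_smul'
    (measurable_gaussianPDF μ v) (by simp [gaussianPDF_lt_top])] at h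
  simpa [toReal_gaussianPDF, mul_comm] using h

lemma integral_mul_deriv_gaussianPDFReal (μ : ℝ) {v : ℝ≥0} (hv : v ≠ 0) :
    ∫ x, x * deriv (gaussianPDFReal μ v) x = -1 := by
  have hd := hasDerivAt_gaussianPDFReal μ v
  simp_rw [(hd _).deriv]
  have hI := integrable_pow_mul_gaussianPDFReal μ hv
  have hparts := integral_mul_deriv_eq_deriv_mul_of_integrable (u := fun x ↦ x)
    (u' := fun _ ↦ 1) (fun x _ ↦ hasDerivAt_id' x) (fun x _ ↦ hd x) ?_ ?_ ?_
  · simpa [integral_gaussianPDFReal_eq_one μ hv] using hparts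
  · refine (((hI 2).const_mul (-(v : ℝ)⁻¹)).add ((hI 1).const_mul (μ / v))).congr
      (Filter.Eventually.of_forall fun x ↦ ?_)
    simp only [Pi.mul_apply, Pi.add_apply]
    ring
  · exact (integrable_gaussianPDFReal μ v).congr (.of_forall fun x ↦ by simp)
  · exact (hI 1).congr (.of_forall fun x ↦ by simp)

lemma gaussianPDFReal_zero_sqrt_mul {v : ℝ≥0} (hv : v ≠ 0) (y : ℝ) :
    gaussianPDFReal 0 v (√(2 * v) * y) = (√(2 * v) * √π)⁻¹ * rexp (-y ^ 2) := by
  rw [gaussianPDFReal, ← sqrt_mul (by positivity), sub_zero, mul_pow, sq_sqrt (by positivity)]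
  congr 3
  · ring
  · field_simp

lemma integral_mul_gaussianPDFReal_div_sub {v : ℝ≥0} (hv : v ≠ 0) {w : ℂ} (hw : w.im ≠ 0) :
    ∫ x : ℝ, (x : ℂ) * (gaussianPDFReal 0 v x : ℂ) / (w - x)
      = -(1 + w / (√(2 * v) : ℝ) * plasmaZ (w / (√(2 * v) : ℝ))) := by
  set c := √(2 * (v : ℝ)) with hc_def
  have hc : 0 < c := sqrt_pos.2 (by positivity)
  have hcC : (c : ℂ) ≠ 0 := by exact_mod_cast hc.ne'
  set ζ := w / (c : ℂ)
  have hζ : ζ.im ≠ 0 := by simp [ζ, Complex.div_ofReal_im, hw, hc.ne']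
  have hscale : ∀ y : ℝ, c • (((c * y : ℝ) : ℂ) * (gaussianPDFReal 0 v (c * y) : ℂ)
      / (w - ((c * y : ℝ) : ℂ))) = -(√π : ℂ)⁻¹ * ((y : ℂ) * Complex.exp (-(y : ℂ) ^ 2) / (y - ζ)) := by
    intro y
    have hne : (y : ℂ) - ζ ≠ 0 := fun h ↦ hζ (by simpa using (congrArg Complex.im h).symm)
    have hw' : w - ((c * y : ℝ) : ℂ) = -(c * ((y : ℂ) - ζ)) := by
      simp only [ζ]; push_cast; field_simp; ring
    rw [gaussianPDFReal_zero_sqrt_mul hv, ← hc_def, hw', Complex.real_smul]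
    push_cast [Complex.ofReal_exp]
    field_simp
  calc ∫ x : ℝ, (x : ℂ) * (gaussianPDFReal 0 v x : ℂ) / (w - x)
      = ∫ y : ℝ, c • (((c * y : ℝ) : ℂ) * (gaussianPDFReal 0 v (c * y) : ℂ)
          / (w - ((c * y : ℝ) : ℂ))) := by
        rw [integral_smul, Measure.integral_comp_mul_left (fun x : ℝ ↦ (x : ℂ) *
          (gaussianPDFReal 0 v x : ℂ) / (w - x)), abs_of_pos (inv_pos.2 hc), smul_smul,
          mul_inv_cancel₀ hc.ne', one_smul]
    _ = -(1 + ζ * plasmaZ ζ) := by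
        simp_rw [hscale]
        rw [integral_const_mul, integral_mul_cexp_neg_sq_div_sub hζ]
        field_simp

lemma integral_integral_mul_deriv_gaussianPDFReal_div_sub (μ : ℝ) {v : ℝ≥0} (hv : v ≠ 0) {w : ℂ}
    (hw : w.im ≠ 0) :
    ∫ vy : ℝ, ∫ vx : ℝ, (vx : ℂ) * (vy : ℂ) *
        ((deriv (fun t ↦ gaussianPDFReal 0 v vx * gaussianPDFReal μ v t) vy : ℝ) : ℂ) / (w - vx)
      = 1 + w / (√(2 * v) : ℝ) * plasmaZ (w / (√(2 * v) : ℝ)) := by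
  have hsep : ∀ vy vx : ℝ, (vx : ℂ) * (vy : ℂ) *
      ((deriv (fun t ↦ gaussianPDFReal 0 v vx * gaussianPDFReal μ v t) vy : ℝ) : ℂ) / (w - vx)
        = ((vy * deriv (gaussianPDFReal μ v) vy : ℝ) : ℂ)
          * ((vx : ℂ) * (gaussianPDFReal 0 v vx : ℂ) / (w - vx)) := by
    intro vy vx
    rw [deriv_const_mul _ (hasDerivAt_gaussianPDFReal μ v vy).differentiableAt]
    push_cast
    ring
  simp_rw [hsep, integral_const_mul]
  rw [integral_mul_const, integral_complex_ofReal, integral_mul_deriv_gaussianPDFReal μ hv,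
    integral_mul_gaussianPDFReal_div_sub hv hw]
  push_cast
  ring

lemma fPlus_eq_mul_gaussianPDFReal (vth u vx vy : ℝ) :
    fPlus vth u vx vy = gaussianPDFReal 0 (vth ^ 2).toNNReal vx
      * gaussianPDFReal (-u) (vth ^ 2).toNNReal vy := by
  simp only [fPlus, gaussianPDFReal, Real.coe_toNNReal _ (sq_nonneg vth)]
  rw [mul_mul_mul_comm, ← exp_add, ← mul_inv, mul_self_sqrt (by positivity)]
  congr 2 <;> ring

lemma fMinus_eq_mul_gaussianPDFReal (vth u vx vy : ℝ) :
    fMinus vth u vx vy = gaussianPDFReal 0 (vth ^ 2).toNNReal vx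
      * gaussianPDFReal u (vth ^ 2).toNNReal vy := by
  simp only [fMinus, gaussianPDFReal, Real.coe_toNNReal _ (sq_nonneg vth)]
  rw [mul_mul_mul_comm, ← exp_add, ← mul_inv, mul_self_sqrt (by positivity)]
  congr 2 <;> ring

/-- Fourth integral in the kinetic Weibel dispersion derivation: for `Im w > 0` and
`ζ = w/(√2 v_th)`, `Σ_± ∫∫ v_x v_y (∂f^±/∂v_y)/(w − v_x) dv_x dv_y = 2(1 + ζ Z(ζ))`. -/
theorem weibel_fourth_integral
    (vth u : ℝ) (hvth : 0 < vth) (w : ℂ) (hw : 0 < w.im) :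
    ((∫ vy : ℝ, ∫ vx : ℝ,
        (vx : ℂ) * (vy : ℂ) *
          ((deriv (fun t : ℝ => fPlus vth u vx t) vy : ℝ) : ℂ) / (w - (vx : ℂ))) +
      (∫ vy : ℝ, ∫ vx : ℝ,
        (vx : ℂ) * (vy : ℂ) *
          ((deriv (fun t : ℝ => fMinus vth u vx t) vy : ℝ) : ℂ) / (w - (vx : ℂ)))) =
      2 * (1 + w / ((Real.sqrt 2 : ℂ) * (vth : ℂ)) *
        plasmaZ (w / ((Real.sqrt 2 : ℂ) * (vth : ℂ)))) := by
  have hv : (vth ^ 2).toNNReal ≠ 0 := by simpa using hvth.ne'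
  have hscale : ((√(2 * vth ^ 2) : ℝ) : ℂ) = √2 * vth := by
    rw [sqrt_mul zero_le_two, sqrt_sq hvth.le, Complex.ofReal_mul]
  simp_rw [fPlus_eq_mul_gaussianPDFReal, fMinus_eq_mul_gaussianPDFReal]
  rw [integral_integral_mul_deriv_gaussianPDFReal_div_sub (-u) hv hw.ne',
    integral_integral_mul_deriv_gaussianPDFReal_div_sub u hv hw.ne']
  simp only [Real.coe_toNNReal _ (sq_nonneg vth), hscale]
  ring
end
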